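/- For the lazy random walk on a finite connected weighted graph and its spectral decomposition, if μ*_x(λ) := ∑_{k: 0<λ_k ≤ λ} |g_k(x)|² (the vertex spectral measure minus the atom at 0) satisfies μ*_x(λ) ≤ ψ(λ) for an increasing continuously differentiable function ψ with ψ(0)=0, then for every t ≥ 1, p_t(x,x) − π(x) ≤ ∫₀² (1 − λ/2)^t ψ'(λ) dλ. -/

import Mathlib

/-- The normalized Laplacian `I - D^{-1/2} A D^{-1/2}` of the weighted graph `W`. -/
noncomputable def normLap {n : ℕ} (W : Matrix (Fin n) (Fin n) ℝ) :
    Matrix (Fin n) (Fin n) ℝ :=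
  Matrix.of fun x y =>
    (if x = y then (1 : ℝ) else 0) -
      W x y / (Real.sqrt (∑ z, W x z) * Real.sqrt (∑ z, W y z))

/-- Transition matrix `P = (I + D⁻¹A)/2` of the lazy random walk. -/
noncomputable def lazyP {n : ℕ} (W : Matrix (Fin n) (Fin n) ℝ) :
    Matrix (Fin n) (Fin n) ℝ :=
  Matrix.of fun x y => ((if x = y then (1 : ℝ) else 0) + W x y / (∑ z, W x z)) / 2

/-!
Conjugating `P` by `D^{1/2}` turns it into the symmetric matrix `I - L/2`, whose spectral
decomposition gives `p_t(x,x) = ∑_k (1 - λ_k/2)^t g_k(x)²`; the term `k = 1` is `π(x)`.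
The eigenvalues lie in `[0,2]`, so with `u(s) = (1 - s/2)^t` each remaining term is
`g_k(x)² ∫_{λ_k}^2 (-u')`, and the sum becomes `∫_0^2 μ*_x (-u') ≤ ∫_0^2 ψ (-u')`, which
equals `∫_0^2 u ψ'` after an integration by parts (`u(2) = 0`, `ψ(0) = 0`).
-/

open MeasureTheory Matrix Set

theorem integral_ite_lt_eq {f : ℝ → ℝ} {a b m : ℝ} (hm : m ∈ Icc a b)
    (hf : IntervalIntegrable f volume a b) :
    ∫ s in a..b, (if m < s then f s else 0) = ∫ s in m..b, f s := by
  have hfm : IntervalIntegrable f volume a m :=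
    hf.mono_set (uIcc_subset_uIcc_left (mem_uIcc_of_le hm.1 hm.2))
  have hsplit :
      (fun s => if m < s then f s else 0) = fun s => f s - {s | s ≤ m}.indicator f s := by
    funext s
    by_cases hs : m < s
    · simp [hs, not_le.2 hs]
    · simp [hs, not_lt.1 hs]
  have hind : IntervalIntegrable ({s | s ≤ m}.indicator f) volume a b :=
    intervalIntegrable_iff.2 ((intervalIntegrable_iff.1 hf).indicator measurableSet_Iic)
  rw [hsplit, intervalIntegral.integral_sub hf hind,
    intervalIntegral.integral_indicator hm, intervalIntegral.integral_interval_sub_left hf hfm]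

theorem mul_eq_integral_ite_lt_mul_neg_deriv {u u' : ℝ → ℝ} {a b m : ℝ} (c : ℝ)
    (hm : m ∈ Icc a b) (hu : ∀ s ∈ Icc a b, HasDerivAt u (u' s) s)
    (hu' : IntervalIntegrable u' volume a b) (hub : u b = 0) :
    u m * c = ∫ s in a..b, (if m < s then c else 0) * -u' s := by
  have hsub : uIcc m b ⊆ Icc a b := by
    rw [uIcc_of_le hm.2]
    exact Icc_subset_Icc_left hm.1
  simp only [ite_mul, zero_mul]
  rw [integral_ite_lt_eq (f := fun s => c * -u' s) hm (hu'.neg.const_mul c),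
    intervalIntegral.integral_const_mul, intervalIntegral.integral_neg,
    intervalIntegral.integral_eq_sub_of_hasDerivAt (fun s hs => hu s (hsub hs))
      (hu'.mono_set (hsub.trans (uIcc_of_le (hm.1.trans hm.2)).symm.subset)), hub]
  ring

theorem monotone_ite_lt {m c : ℝ} (hc : 0 ≤ c) :
    Monotone fun s : ℝ => if m < s then c else 0 := by
  intro s s' hss'
  dsimp only
  split_ifs <;> linarith

theorem ite_lt_le_ite_le {m s c : ℝ} (hc : 0 ≤ c) :
    (if m < s then c else 0) ≤ if m ≤ s then c else 0 := by
  split_ifs <;> linarith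

theorem sum_mul_le_integral_mul_deriv {ι : Type*} (S : Finset ι) {c μ : ι → ℝ} {a b : ℝ}
    {u u' ψ ψ' : ℝ → ℝ} (hab : a ≤ b)
    (hu : ∀ s ∈ Icc a b, HasDerivAt u (u' s) s) (hu'c : ContinuousOn u' (Icc a b))
    (hu'nonpos : ∀ s ∈ Icc a b, u' s ≤ 0) (hub : u b = 0)
    (hψ : ∀ s ∈ Icc a b, HasDerivAt ψ (ψ' s) s) (hψ'c : ContinuousOn ψ' (Icc a b))
    (hψa : ψ a = 0)
    (hc : ∀ i ∈ S, 0 ≤ c i) (hμ : ∀ i ∈ S, μ i ∈ Icc a b)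
    (hbound : ∀ s ∈ Icc a b, ∑ i ∈ S, (if μ i ≤ s then c i else 0) ≤ ψ s) :
    ∑ i ∈ S, u (μ i) * c i ≤ ∫ s in a..b, u s * ψ' s := by
  rw [← uIcc_of_le hab] at hu'c
  have hu'int : IntervalIntegrable u' volume a b := hu'c.intervalIntegrable
  have hψc : ContinuousOn ψ (uIcc a b) := continuousOn_of_forall_continuousAt fun s hs =>
    (hψ s (uIcc_of_le hab ▸ hs)).continuousAt
  have hstep : ∀ i ∈ S,
      IntervalIntegrable (fun s => (if μ i < s then c i else 0) * -u' s) volume a b :=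
    fun i hi => ((monotone_ite_lt (hc i hi)).intervalIntegrable).mul_continuousOn hu'c.neg
  have hsum : IntervalIntegrable (fun s => (∑ i ∈ S, if μ i < s then c i else 0) * -u' s)
      volume a b := by
    simpa only [Finset.sum_mul, Finset.sum_fn] using IntervalIntegrable.sum S hstep
  calc ∑ i ∈ S, u (μ i) * c i
      = ∑ i ∈ S, ∫ s in a..b, (if μ i < s then c i else 0) * -u' s :=
        Finset.sum_congr rfl fun i hi =>
          mul_eq_integral_ite_lt_mul_neg_deriv (c i) (hμ i hi) hu hu'int hub
    _ = ∫ s in a..b, (∑ i ∈ S, if μ i < s then c i else 0) * -u' s := by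
      simp only [Finset.sum_mul, intervalIntegral.integral_finsetSum hstep]
    _ ≤ ∫ s in a..b, ψ s * -u' s := by
      refine intervalIntegral.integral_mono_on hab hsum
        (hψc.intervalIntegrable.mul_continuousOn hu'c.neg) fun s hs => ?_
      exact mul_le_mul_of_nonneg_right
        ((Finset.sum_le_sum fun i hi => ite_lt_le_ite_le (hc i hi)).trans (hbound s hs))
        (neg_nonneg.2 (hu'nonpos s hs))
    _ = ∫ s in a..b, u s * ψ' s := by
      rw [intervalIntegral.integral_mul_deriv_eq_deriv_mul
        (fun s hs => hu s (uIcc_of_le hab ▸ hs)) (fun s hs => hψ s (uIcc_of_le hab ▸ hs))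
        hu'int (hψ'c.mono (uIcc_of_le hab).subset).intervalIntegrable, hub, hψa, zero_mul,
        mul_zero, sub_zero, zero_sub, ← intervalIntegral.integral_neg]
      congr 1 with s
      ring

theorem degree_pos_of_preconnected {V : Type*} [Fintype V] [Nontrivial V] {W : Matrix V V ℝ}
    (hsym : ∀ x y, W x y = W y x) (hnn : ∀ x y, 0 ≤ W x y)
    (hconn : (SimpleGraph.fromRel fun x y => W x y ≠ 0).Preconnected) (y : V) :
    0 < ∑ z, W y z := by
  obtain ⟨z, -, hyz⟩ := hconn.exists_adj_of_nontrivial y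
  have hWyz : W y z ≠ 0 := hyz.elim id (fun h => hsym y z ▸ h)
  exact ((hnn y z).lt_of_ne' hWyz).trans_le
    (Finset.single_le_sum (fun z _ => hnn y z) (Finset.mem_univ z))

theorem degree_pos_of_connected {V : Type*} [Fintype V] {W : Matrix V V ℝ}
    (hsym : ∀ x y, W x y = W y x) (hnn : ∀ x y, 0 ≤ W x y)
    (hconn : (SimpleGraph.fromRel fun x y => W x y ≠ 0).Connected) {v : V → ℝ}
    (hv : ∀ x, v x = √((∑ z, W x z) / ∑ u, ∑ z, W u z)) (hv1 : ∑ x, v x * v x = 1)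
    (y : V) :
    0 < ∑ z, W y z := by
  rcases subsingleton_or_nontrivial V with _ | _
  · -- a single vertex has no neighbour; here the normalisation of `v` rules out degree zero
    by_contra hy
    have hdy : ∑ z, W y z = 0 := le_antisymm (not_lt.1 hy) (Finset.sum_nonneg fun z _ => hnn y z)
    have hv0 : ∀ u, v u = 0 := fun u => by simp [hv, Subsingleton.elim u y, hdy]
    simp [hv0] at hv1
  · exact degree_pos_of_preconnected hsym hnn hconn.preconnected y

theorem abs_sum_sum_mul_le {V : Type*} [Fintype V] {W : Matrix V V ℝ}
    (hsym : ∀ x y, W x y = W y x) (hnn : ∀ x y, 0 ≤ W x y) (f : V → ℝ) :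
    |∑ a, ∑ b, W a b * f a * f b| ≤ ∑ a, (∑ b, W a b) * f a ^ 2 := by
  set B := ∑ a, ∑ b, W a b * f a * f b
  have hswap : ∑ a, ∑ b, W a b * f b ^ 2 = ∑ a, (∑ b, W a b) * f a ^ 2 := by
    rw [Finset.sum_comm]
    simp_rw [Finset.sum_mul, hsym]
  have key : ∀ ε : ℝ, ε ^ 2 = 1 → 0 ≤ ∑ a, (∑ b, W a b) * f a ^ 2 + ε * B := by
    intro ε hε
    have hexpand : ∀ a b, W a b * (f a + ε * f b) ^ 2
        = W a b * f a ^ 2 + W a b * f b ^ 2 + 2 * ε * (W a b * f a * f b) := by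
      intro a b
      linear_combination W a b * f b ^ 2 * hε
    have hsq : 0 ≤ ∑ a, ∑ b, W a b * (f a + ε * f b) ^ 2 :=
      Finset.sum_nonneg fun a _ => Finset.sum_nonneg fun b _ => mul_nonneg (hnn a b) (sq_nonneg _)
    simp_rw [hexpand, Finset.sum_add_distrib, ← Finset.mul_sum, hswap, ← Finset.sum_mul] at hsq
    linarith
  have hminus := key (-1) (by norm_num)
  have hplus := key 1 (one_pow 2)
  exact abs_le.2 ⟨by linarith, by linarith⟩

theorem dotProduct_normLap_mulVec {n : ℕ} (W : Matrix (Fin n) (Fin n) ℝ) (v : Fin n → ℝ) :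
    v ⬝ᵥ (normLap W *ᵥ v) = v ⬝ᵥ v - ∑ a, ∑ b,
      W a b * (v a / √(∑ z, W a z)) * (v b / √(∑ z, W b z)) := by
  simp only [dotProduct, mulVec, normLap, of_apply, Finset.mul_sum, ← Finset.sum_sub_distrib]
  refine Finset.sum_congr rfl fun a _ => ?_
  simp only [sub_mul, mul_sub, Finset.sum_sub_distrib, ite_mul, one_mul, zero_mul, mul_ite,
    mul_zero, Finset.sum_ite_eq, Finset.mem_univ, if_true]
  exact congrArg _ (Finset.sum_congr rfl fun b _ => by ring)

theorem normLap_eigenvalue_mem_Icc {n : ℕ} {W : Matrix (Fin n) (Fin n) ℝ}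
    (hsym : ∀ x y, W x y = W y x) (hnn : ∀ x y, 0 ≤ W x y) (hd : ∀ y, 0 < ∑ z, W y z)
    {v : Fin n → ℝ} {μ : ℝ} (hv : normLap W *ᵥ v = μ • v) (hv1 : v ⬝ᵥ v = 1) :
    μ ∈ Icc 0 2 := by
  have hμ := dotProduct_normLap_mulVec W v
  rw [hv, dotProduct_smul, hv1, smul_eq_mul, mul_one] at hμ
  have hB := abs_sum_sum_mul_le hsym hnn fun a => v a / √(∑ z, W a z)
  have hnorm : ∑ a, (∑ b, W a b) * (v a / √(∑ z, W a z)) ^ 2 = 1 := by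
    rw [← hv1]
    refine Finset.sum_congr rfl fun a _ => ?_
    rw [div_pow, Real.sq_sqrt (hd a).le, mul_div_cancel₀ _ (hd a).ne', sq]
  rw [hnorm] at hB
  obtain ⟨hlo, hhi⟩ := abs_le.1 hB
  constructor <;> linarith

theorem pow_apply_eq_sum_of_orthonormal_eigenvectors {R V : Type*} [CommRing R] [Fintype V]
    [DecidableEq V] (M : Matrix V V R) (g : V → V → R) (ev : V → R)
    (heig : ∀ i, M *ᵥ g i = ev i • g i)
    (horth : ∀ i j, ∑ x, g i x * g j x = if i = j then 1 else 0) (t : ℕ) (x y : V) :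
    (M ^ t) x y = ∑ i, ev i ^ t * g i x * g i y := by
  have hrows : of g * (of g)ᵀ = 1 := by
    ext i j
    simpa [mul_apply, one_apply] using horth i j
  have hcomplete : ∀ a b, ∑ i, g i a * g i b = if a = b then 1 else 0 := by
    intro a b
    have hcols : (of g)ᵀ * of g = 1 := mul_eq_one_comm.1 hrows
    simpa [mul_apply, one_apply] using congrFun₂ hcols a b
  have hpow : ∀ i, M ^ t *ᵥ g i = ev i ^ t • g i := by
    intro i
    induction t with
    | zero => simp
    | succ t ih => rw [pow_succ, ← mulVec_mulVec, heig, mulVec_smul, ih, smul_smul, pow_succ']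
  calc (M ^ t) x y = ∑ b, (M ^ t) x b * ∑ i, g i b * g i y := by
        simp [hcomplete]
    _ = ∑ i, (M ^ t *ᵥ g i) x * g i y := by
        simp only [Finset.mul_sum, mulVec, dotProduct, Finset.sum_mul]
        rw [Finset.sum_comm]
        exact Finset.sum_congr rfl fun i _ => Finset.sum_congr rfl fun b _ => by ring
    _ = ∑ i, ev i ^ t * g i x * g i y := by simp [hpow]

theorem pow_apply_of_apply_eq_conj {K V : Type*} [Field K] [Fintype V] [DecidableEq V]
    {P M : Matrix V V K} {r : V → K} (hr : ∀ a, r a ≠ 0)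
    (hP : ∀ a b, P a b = (r a)⁻¹ * M a b * r b) (t : ℕ) (a b : V) :
    (P ^ t) a b = (r a)⁻¹ * (M ^ t) a b * r b := by
  let D : (Matrix V V K)ˣ :=
    ⟨diagonal r, diagonal fun a => (r a)⁻¹, by simp [hr], by simp [hr]⟩
  have hconj : P = (↑D⁻¹ : Matrix V V K) * M * (D : Matrix V V K) := by
    ext a b
    simp [D, hP, diagonal_mul, mul_diagonal]
  rw [hconj, Units.conj_pow']
  simp [D, diagonal_mul, mul_diagonal]

theorem lazyP_apply_eq {n : ℕ} {W : Matrix (Fin n) (Fin n) ℝ} (hd : ∀ y, 0 < ∑ z, W y z)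
    (a b : Fin n) :
    lazyP W a b =
      (√(∑ z, W a z))⁻¹ * (1 - (2⁻¹ : ℝ) • normLap W) a b * √(∑ z, W b z) := by
  have hda := (hd a).ne'
  have ha := (Real.sqrt_pos.2 (hd a)).ne'
  have hb := (Real.sqrt_pos.2 (hd b)).ne'
  simp only [lazyP, normLap, of_apply, Matrix.sub_apply, Matrix.one_apply, Matrix.smul_apply,
    smul_eq_mul]
  split_ifs with hab
  · subst hab
    field_simp
    rw [Real.sq_sqrt (hd a).le]
    ring
  · field_simp
    rw [Real.sq_sqrt (hd a).le]
    ring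

theorem hasDerivAt_one_sub_div_two_pow (t : ℕ) (s : ℝ) :
    HasDerivAt (fun s => (1 - s / 2) ^ t) (-(t / 2 * (1 - s / 2) ^ (t - 1))) s :=
  ((((hasDerivAt_id' s).div_const 2).const_sub 1).fun_pow t).congr_deriv (by ring)

theorem stmt14_general {n : ℕ} [NeZero n] (W : Matrix (Fin n) (Fin n) ℝ)
    (hsym : ∀ x y, W x y = W y x) (hnn : ∀ x y, 0 ≤ W x y)
    (hconn : (SimpleGraph.fromRel fun x y => W x y ≠ 0).Connected)
    (mu : Fin n → ℝ) (g : Fin n → Fin n → ℝ)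
    (hg0 : ∀ x, g 0 x = Real.sqrt ((∑ z, W x z) / (∑ u, ∑ z, W u z)))
    (hmu0 : mu 0 = 0)
    (heig : ∀ i, (normLap W).mulVec (g i) = mu i • g i)
    (horth : ∀ i j, (∑ x, g i x * g j x) = if i = j then (1 : ℝ) else 0)
    (x : Fin n)
    (ψ ψ' : ℝ → ℝ)
    (hderiv : ∀ s, HasDerivAt ψ (ψ' s) s)
    (hcont : Continuous ψ')
    (hψ0 : ψ 0 = 0)
    (hbound : ∀ s ∈ Set.Icc (0 : ℝ) 2,
      (∑ i ∈ Finset.univ.erase 0, if mu i ≤ s then g i x ^ 2 else 0) ≤ ψ s) :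
    ∀ t : ℕ, 1 ≤ t →
      (lazyP W ^ t) x x - (∑ z, W x z) / (∑ u, ∑ z, W u z) ≤
        ∫ s in (0 : ℝ)..2, (1 - s / 2) ^ t * ψ' s := by
  intro t ht
  have hd : ∀ y, 0 < ∑ z, W y z :=
    degree_pos_of_connected hsym hnn hconn hg0 (by simpa using horth 0 0)
  have hmu : ∀ i, mu i ∈ Icc 0 2 := fun i =>
    normLap_eigenvalue_mem_Icc hsym hnn hd (heig i) (by simpa [dotProduct] using horth i i)
  have hMeig : ∀ i, (1 - (2⁻¹ : ℝ) • normLap W) *ᵥ g i = (1 - mu i / 2) • g i := by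
    intro i
    rw [sub_mulVec, one_mulVec, smul_mulVec, heig, smul_smul]
    module
  have hreturn : (lazyP W ^ t) x x = ∑ i, (1 - mu i / 2) ^ t * g i x ^ 2 := by
    rw [pow_apply_of_apply_eq_conj (fun a => (Real.sqrt_pos.2 (hd a)).ne') (lazyP_apply_eq hd),
      pow_apply_eq_sum_of_orthonormal_eigenvectors _ g _ hMeig horth, mul_comm, ← mul_assoc,
      mul_inv_cancel₀ (Real.sqrt_pos.2 (hd x)).ne', one_mul]
    simp only [mul_assoc, sq]
  have hstationary : (∑ z, W x z) / (∑ u, ∑ z, W u z) = g 0 x ^ 2 := by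
    rw [hg0, Real.sq_sqrt (div_nonneg (hd x).le (Finset.sum_nonneg fun u _ => (hd u).le))]
  rw [hreturn, hstationary, ← Finset.add_sum_erase _ _ (Finset.mem_univ 0), hmu0]
  rw [zero_div, sub_zero, one_pow, one_mul, add_sub_cancel_left]
  exact sum_mul_le_integral_mul_deriv _ zero_le_two
    (fun s _ => hasDerivAt_one_sub_div_two_pow t s) (by fun_prop)
    (fun s hs => neg_nonpos.2 (mul_nonneg (by positivity) (pow_nonneg (by linarith [hs.2]) _)))
    (by simp [zero_pow (by omega : t ≠ 0)]) (fun s _ => hderiv s) hcont.continuousOn hψ0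
    (fun i _ => sq_nonneg _) (fun i _ => hmu i) hbound

/-- If the vertex spectral measure `μ*_x(λ) = ∑_{k : 0 < λ_k ≤ λ} g_k(x)²` is bounded by an
increasing continuously differentiable `ψ` with `ψ(0) = 0`, then
`p_t(x,x) - π(x) ≤ ∫₀² (1-λ/2)^t ψ'(λ) dλ`. -/
theorem stmt14 {n : ℕ} [NeZero n] (W : Matrix (Fin n) (Fin n) ℝ)
    (hsym : ∀ x y, W x y = W y x) (hnn : ∀ x y, 0 ≤ W x y) (hloop : ∀ x, W x x = 0)
    (hconn : (SimpleGraph.fromRel fun x y => W x y ≠ 0).Connected)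
    (mu : Fin n → ℝ) (g : Fin n → Fin n → ℝ)
    (hg0 : ∀ x, g 0 x = Real.sqrt ((∑ z, W x z) / (∑ u, ∑ z, W u z)))
    (hmu0 : mu 0 = 0)
    (hmunz : ∀ i, i ≠ 0 → mu i ≠ 0)
    (heig : ∀ i, (normLap W).mulVec (g i) = mu i • g i)
    (horth : ∀ i j, (∑ x, g i x * g j x) = if i = j then (1 : ℝ) else 0)
    (x : Fin n)
    (ψ ψ' : ℝ → ℝ)
    (hderiv : ∀ s, HasDerivAt ψ (ψ' s) s)
    (hcont : Continuous ψ')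
    (hmono : Monotone ψ)
    (hψ0 : ψ 0 = 0)
    (hbound : ∀ s ∈ Set.Icc (0 : ℝ) 2,
      (∑ i ∈ Finset.univ.erase 0, if mu i ≤ s then g i x ^ 2 else 0) ≤ ψ s) :
    ∀ t : ℕ, 1 ≤ t →
      (lazyP W ^ t) x x - (∑ z, W x z) / (∑ u, ∑ z, W u z) ≤
        ∫ s in (0 : ℝ)..2, (1 - s / 2) ^ t * ψ' s :=
  stmt14_general W hsym hnn hconn mu g hg0 hmu0 heig horth x ψ ψ' hderiv hcont hψ0 hbound
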